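/- If each node i in layer L₁ receives incoming rate f_i and the layer-1-to-layer-2 optimization returns rates r_i with r_i = f_i for all i ∈ L₁ at iteration c > 1 (U(c) = ∅), then at iteration c−1 the rate vector r(c−1) was not optimal unless U(c−1) = ∅ as well; equivalently, U(c) = ∅ for c ≥ 2 implies U(c−1) = ∅. -/
import Mathlib


open Finset

/-- Lemma "`|U(c)| > 0` for all `c ≥ 2`" from FlowMax: let `r` be an optimal
rate vector under incoming constraints `f` (with convex, downward-closed
downstream feasible set `C`), and let the updated constraints `f'` satisfy
`f'ᵢ > rᵢ` for all `i` (the FlowMax update). If the optimum `r'` under `f'`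
saturates all constraints (`r'ᵢ = f'ᵢ`, i.e. `U(c) = ∅`), then `r` already
saturated all of its constraints (`rᵢ = fᵢ`, i.e. `U(c-1) = ∅`). -/
theorem flowMax_U_empty_implies_previous_empty {ι : Type} [Fintype ι]
    (C : Set (ι → ℝ)) (hC_convex : Convex ℝ C)
    (hC_dc : ∀ x ∈ C, ∀ y : ι → ℝ, (∀ i, 0 ≤ y i) → (∀ i, y i ≤ x i) → y ∈ C)
    (f f' r r' : ι → ℝ)
    (hr_opt : IsGreatest
      {S : ℝ | ∃ x ∈ C, (∀ i, x i ≤ f i) ∧ S = ∑ i, x i} (∑ i, r i))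
    (hrC : r ∈ C) (hrf : ∀ i, r i ≤ f i) (hrnn : ∀ i, 0 ≤ r i)
    (hr'C : r' ∈ C) (hr'f : ∀ i, r' i ≤ f' i)
    (hupd : ∀ i, r i < f' i)
    (hU_empty : ∀ i, r' i = f' i) :
    ∀ i, r i = f i := by
  intro i0
  by_contra hne
  have hlt : r i0 < f i0 := lt_of_le_of_ne (hrf i0) hne
  have hd : ∀ i, r i < r' i := fun i => (hU_empty i) ▸ hupd i
  have hden : 0 < r' i0 - r i0 := sub_pos.2 (hd i0)
  set t : ℝ := min 1 ((f i0 - r i0) / (r' i0 - r i0)) with ht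
  have ht0 : 0 < t := lt_min one_pos (div_pos (sub_pos.2 hlt) hden)
  have ht1 : t ≤ 1 := min_le_left _ _
  set y : ι → ℝ := (1 - t) • r + t • r' with hy
  have hyC : y ∈ C := hC_convex hrC hr'C (by linarith) (le_of_lt ht0) (by ring)
  have hyi : ∀ i, y i = r i + t * (r' i - r i) := by
    intro i; simp [hy]; ring
  have hyr : ∀ i, r i < y i := fun i => by
    have := mul_pos ht0 (sub_pos.2 (hd i))
    rw [hyi i]; linarith
  set z : ι → ℝ := fun i => min (y i) (f i) with hz
  have hzC : z ∈ C := hC_dc y hyC z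
    (fun i => le_min (le_of_lt ((hrnn i).trans_lt (hyr i))) ((hrnn i).trans (hrf i)))
    (fun i => min_le_left _ _)
  have hzr : ∀ i, r i ≤ z i := fun i => le_min (le_of_lt (hyr i)) (hrf i)
  have hz0 : r i0 < z i0 := lt_min (hyr i0) hlt
  have hle : ∑ i, z i ≤ ∑ i, r i :=
    hr_opt.2 ⟨z, hzC, fun i => min_le_right _ _, rfl⟩
  have hgt : ∑ i, r i < ∑ i, z i :=
    Finset.sum_lt_sum (fun i _ => hzr i) ⟨i0, Finset.mem_univ _, hz0⟩
  linarith
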